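/- Let H = ([n],[m],E) be a bipartite graph with connected base graph and let p ∈ ∂(H) be a boundary vector. If A_1,...,A_n is a set of cylinders in I^m conforming with H such that μ(A_i) ≤ p_i for all i and μ(∪_i A_i) = 1, then μ(A_i) = p_i for all i. -/

import Mathlib

open MeasureTheory

/-- The uniform probability measure on the unit cube `[0,1]^m`, viewed as a measure
on `Fin m → ℝ`. -/
noncomputable def cubeMeasure (m : ℕ) : Measure (Fin m → ℝ) :=
  Measure.pi fun _ => volume.restrict (Set.Icc 0 1)

/-- `A` is a cylinder depending only on the coordinates in `S`. -/
def DependsOnlyOn {m : ℕ} (A : Set (Fin m → ℝ)) (S : Set (Fin m)) : Prop :=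
  ∀ x y : Fin m → ℝ, (∀ j ∈ S, x j = y j) → (x ∈ A ↔ y ∈ A)

/-- A cylinder set conforms with the bigraph given by edge relation `E`. -/
def Conforms {n m : ℕ} (E : Fin n → Fin m → Prop) (A : Fin n → Set (Fin m → ℝ)) : Prop :=
  (∀ i, MeasurableSet (A i)) ∧ ∀ i, DependsOnlyOn (A i) {j | E i j}

/-- The base graph of the bigraph. -/
def baseGraph {n m : ℕ} (E : Fin n → Fin m → Prop) : SimpleGraph (Fin n) where
  Adj i j := i ≠ j ∧ ∃ k, E i k ∧ E j k
  symm := ⟨by rintro i j ⟨h, k, h1, h2⟩; exact ⟨h.symm, k, h2, h1⟩⟩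
  loopless := ⟨by rintro i ⟨h, -⟩; exact h rfl⟩

/-- `p` is a boundary vector of the bigraph: for every `ε ∈ (0,1)`, every conforming
cylinder set with measure vector `(1-ε)p` has union of measure `< 1`, and some conforming
cylinder set with measure vector `min 1 ((1+ε)p)` has union of full measure. -/
def OnBoundary {n m : ℕ} (E : Fin n → Fin m → Prop) (p : Fin n → ℝ) : Prop :=
  ∀ ε ∈ Set.Ioo (0:ℝ) 1,
    (∀ A : Fin n → Set (Fin m → ℝ), Conforms E A →
      (∀ i, cubeMeasure m (A i) = ENNReal.ofReal ((1 - ε) * p i)) →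
      cubeMeasure m (⋃ i, A i) < 1) ∧
    (∃ A : Fin n → Set (Fin m → ℝ), Conforms E A ∧
      (∀ i, cubeMeasure m (A i) = ENNReal.ofReal (min 1 ((1 + ε) * p i))) ∧
      cubeMeasure m (⋃ i, A i) = 1)

/-!
Suppose `μ(A i) < p i` for some `i`. Slack passes along an edge `i₀ ~ i₁` of the base graph
whose endpoints share a coordinate `j`: cut `[0,1]` into `K` slabs in the coordinate `j`; one slab
`R` carries at least a `1/K` fraction of `A i₁`, and moving `R` from `A i₁` to `A i₀` keeps the
sets conforming and the union full, costs `i₀` at most `1/K` and frees `p i₁ / K` at `i₁`.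
By connectivity every vertex ends up with slack `α > 0`. Enlarging each set by a half-space
`{x | x j < r}` to measure exactly `(1 - ε) p i` with `2ε ≤ α` then gives a conforming cylinder
set with measures `(1 - ε) p` and full union, contradicting the first half of `OnBoundary`.
-/

open Set

theorem SimpleGraph.Preconnected.finset_induction_adj {V : Type*} [Fintype V] [DecidableEq V]
    {G : SimpleGraph V} (hG : G.Preconnected) {P : Finset V → Prop} {W : Finset V}
    (hW : W.Nonempty) (hP : P W)
    (step : ∀ W, P W → ∀ u ∈ W, ∀ v ∉ W, G.Adj u v → P (insert v W)) :
    P Finset.univ := by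
  induction hk : (Finset.univ \ W).card generalizing W with
  | zero =>
    rw [Finset.card_eq_zero, Finset.sdiff_eq_empty_iff_subset, Finset.univ_subset_iff] at hk
    exact hk ▸ hP
  | succ k ih =>
    obtain ⟨v, hv⟩ : ∃ v, v ∉ W := by
      by_contra! h
      simp [Finset.eq_univ_of_forall h] at hk
    obtain ⟨u, hu⟩ := hW
    obtain ⟨d, -, hd, hd'⟩ := (hG u v).some.exists_boundary_dart W hu hv
    refine ih (Finset.insert_nonempty _ _) (step W hP _ hd _ hd' d.adj) ?_
    rw [Finset.sdiff_insert, Finset.card_erase_of_mem (by simpa using hd'), hk]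
    rfl

instance : IsProbabilityMeasure (volume.restrict (Icc (0 : ℝ) 1)) := ⟨by simp⟩

instance (m : ℕ) : IsProbabilityMeasure (cubeMeasure m) := by
  unfold cubeMeasure; infer_instance

section Cube

variable {m : ℕ}

theorem cubeMeasure_preimage_eval (j : Fin m) {S : Set ℝ} (hS : MeasurableSet S) :
    cubeMeasure m (Function.eval j ⁻¹' S) = volume (S ∩ Icc 0 1) := by
  unfold cubeMeasure
  rw [(measurePreserving_eval _ j).measure_preimage hS.nullMeasurableSet,
    Measure.restrict_apply hS]

theorem cubeMeasure_real_preimage_eval_Ico_le (j : Fin m) {a b : ℝ} (hab : a ≤ b) :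
    (cubeMeasure m).real (Function.eval j ⁻¹' Ico a b) ≤ b - a := by
  refine ENNReal.toReal_le_of_le_ofReal (sub_nonneg.2 hab) ?_
  rw [cubeMeasure_preimage_eval j measurableSet_Ico, ← Real.volume_Ico]
  exact measure_mono inter_subset_left

theorem cubeMeasure_preimage_eval_Ico_zero_one (j : Fin m) :
    cubeMeasure m (Function.eval j ⁻¹' Ico 0 1) = 1 := by
  rw [cubeMeasure_preimage_eval j measurableSet_Ico, inter_eq_left.2 Ico_subset_Icc_self]
  simp

theorem cubeMeasure_preimage_eval_Iio_zero (j : Fin m) :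
    cubeMeasure m (Function.eval j ⁻¹' Iio 0) = 0 := by
  rw [cubeMeasure_preimage_eval j measurableSet_Iio,
    (Iio_disjoint_Ici le_rfl).mono_right Icc_subset_Ici_self |>.inter_eq, measure_empty]

theorem DependsOnlyOn.union {A B : Set (Fin m → ℝ)} {T : Set (Fin m)} (hA : DependsOnlyOn A T)
    (hB : DependsOnlyOn B T) : DependsOnlyOn (A ∪ B) T :=
  fun x y h => or_congr (hA x y h) (hB x y h)

theorem DependsOnlyOn.diff {A B : Set (Fin m → ℝ)} {T : Set (Fin m)} (hA : DependsOnlyOn A T)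
    (hB : DependsOnlyOn B T) : DependsOnlyOn (A \ B) T :=
  fun x y h => and_congr (hA x y h) (not_congr (hB x y h))

theorem dependsOnlyOn_preimage_eval {j : Fin m} {T : Set (Fin m)} (hj : j ∈ T) (S : Set ℝ) :
    DependsOnlyOn (Function.eval j ⁻¹' S) T :=
  fun x y h => by simp only [mem_preimage, Function.eval, h j hj]

theorem exists_superset_measureReal_eq {S : Set (Fin m → ℝ)} {T : Set (Fin m)}
    (hS : MeasurableSet S) (hST : DependsOnlyOn S T) {j : Fin m} (hj : j ∈ T) {t : ℝ}
    (hSt : (cubeMeasure m).real S ≤ t) (ht : t ≤ 1) :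
    ∃ S', S ⊆ S' ∧ MeasurableSet S' ∧ DependsOnlyOn S' T ∧ (cubeMeasure m).real S' = t := by
  set f : ℝ → ℝ := fun r => (cubeMeasure m).real (S ∪ Function.eval j ⁻¹' Iio r)
  have hlip : LipschitzWith 1 f := by
    refine LipschitzWith.of_le_add fun b a => ?_
    rcases le_total b a with hba | hab
    · refine (measureReal_mono ?_).trans (le_add_of_nonneg_right dist_nonneg)
      exact union_subset_union_right _ (preimage_mono (Iio_subset_Iio hba))
    · calc f b ≤ f a + (cubeMeasure m).real (Function.eval j ⁻¹' Ico a b) := by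
            refine (measureReal_mono ?_).trans (measureReal_union_le _ _)
            rintro x (hx | hx)
            · exact Or.inl (Or.inl hx)
            by_cases hxa : x j < a
            · exact Or.inl (Or.inr hxa)
            · exact Or.inr ⟨not_lt.1 hxa, hx⟩
        _ ≤ f a + dist b a := by
            rw [Real.dist_eq, abs_of_nonneg (sub_nonneg.2 hab)]
            gcongr
            exact cubeMeasure_real_preimage_eval_Ico_le j hab
  have hf0 : f 0 = (cubeMeasure m).real S := by
    refine le_antisymm ((measureReal_union_le _ _).trans ?_) (measureReal_mono subset_union_left)
    simp [Measure.real, cubeMeasure_preimage_eval_Iio_zero]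
  have hf1 : f 1 = 1 := by
    refine le_antisymm measureReal_le_one ?_
    calc (1 : ℝ) = (cubeMeasure m).real (Function.eval j ⁻¹' Ico 0 1) := by
          simp [Measure.real, cubeMeasure_preimage_eval_Ico_zero_one]
      _ ≤ f 1 := measureReal_mono (subset_union_of_subset_right
          (preimage_mono Ico_subset_Iio_self) _)
  obtain ⟨r, -, hr⟩ := intermediate_value_Icc zero_le_one hlip.continuous.continuousOn
    (by rw [hf0, hf1]; exact ⟨hSt, ht⟩)
  exact ⟨_, subset_union_left, hS.union (measurable_pi_apply j measurableSet_Iio),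
    hST.union (dependsOnlyOn_preimage_eval hj _), hr⟩

theorem exists_measureReal_inter_slab_ge {C : Set (Fin m → ℝ)} (j : Fin m) {K : ℕ} (hK : 0 < K) :
    ∃ k : ℕ, (cubeMeasure m).real C / K ≤
      (cubeMeasure m).real (C ∩ Function.eval j ⁻¹' Ico (k / K) ((k + 1) / K)) := by
  have hKpos : (0 : ℝ) < K := Nat.cast_pos.2 hK
  have hcover : Ico (0 : ℝ) 1 ⊆ ⋃ k ∈ Finset.range K, Ico ((k : ℝ) / K) ((k + 1) / K) := by
    rintro t ⟨ht₀, ht₁⟩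
    simp only [mem_iUnion, Finset.mem_range, mem_Ico, exists_prop]
    refine ⟨⌊t * K⌋₊, ?_, ?_, ?_⟩
    · exact (Nat.floor_lt (by positivity)).2 ((mul_lt_iff_lt_one_left hKpos).2 ht₁)
    · rw [div_le_iff₀ hKpos]; exact Nat.floor_le (by positivity)
    · rw [lt_div_iff₀ hKpos]; exact Nat.lt_floor_add_one _
  have hsum : (cubeMeasure m).real C ≤ ∑ k ∈ Finset.range K,
      (cubeMeasure m).real (C ∩ Function.eval j ⁻¹' Ico (k / K) ((k + 1) / K)) := by
    calc (cubeMeasure m).real C = (cubeMeasure m).real (C ∩ Function.eval j ⁻¹' Ico 0 1) := by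
          simp only [Measure.real, measure_inter_conull
            ((prob_compl_eq_zero_iff (measurable_pi_apply j measurableSet_Ico)).2
              (cubeMeasure_preimage_eval_Ico_zero_one j))]
      _ ≤ (cubeMeasure m).real
          (⋃ k ∈ Finset.range K, C ∩ Function.eval j ⁻¹' Ico ((k : ℝ) / K) ((k + 1) / K)) := by
          refine measureReal_mono ?_ (measure_ne_top _ _)
          rw [← inter_iUnion₂, ← preimage_iUnion₂]
          exact inter_subset_inter_right _ (preimage_mono hcover)
      _ ≤ _ := measureReal_biUnion_finset_le _ _
  obtain ⟨k, -, hk⟩ := Finset.exists_le_of_sum_le (Finset.nonempty_range_iff.2 hK.ne')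
    (f := fun _ => (cubeMeasure m).real C / K)
    (g := fun k : ℕ => (cubeMeasure m).real (C ∩ Function.eval j ⁻¹' Ico (k / K) ((k + 1) / K)))
    (by
      rwa [Finset.sum_const, Finset.card_range, nsmul_eq_mul, mul_div_cancel₀ _ hKpos.ne'])
  exact ⟨k, hk⟩

end Cube

section Bigraph

variable {n m : ℕ} {E : Fin n → Fin m → Prop}

theorem Conforms.exists_transfer {A : Fin n → Set (Fin m → ℝ)} (hA : Conforms E A)
    {i₀ i₁ : Fin n} (hne : i₀ ≠ i₁) {j : Fin m} (hj₀ : E i₀ j) (hj₁ : E i₁ j) {K : ℕ}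
    (hK : 0 < K) :
    ∃ B, Conforms E B ∧ (⋃ i, A i) ⊆ ⋃ i, B i ∧ (∀ i, i ≠ i₀ → i ≠ i₁ → B i = A i) ∧
      (cubeMeasure m).real (B i₀) ≤ (cubeMeasure m).real (A i₀) + (K : ℝ)⁻¹ ∧
      (cubeMeasure m).real (B i₁) ≤ (1 - (K : ℝ)⁻¹) * (cubeMeasure m).real (A i₁) := by
  obtain ⟨k, hk⟩ := exists_measureReal_inter_slab_ge (C := A i₁) j hK
  set R : Set (Fin m → ℝ) := Function.eval j ⁻¹' Ico ((k : ℝ) / K) (((k : ℝ) + 1) / K)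
  have hR : MeasurableSet R := measurable_pi_apply j measurableSet_Ico
  set B := Function.update (Function.update A i₀ (A i₀ ∪ R)) i₁ (A i₁ \ R)
  have hB₀ : B i₀ = A i₀ ∪ R := by simp [B, hne]
  have hB₁ : B i₁ = A i₁ \ R := by simp [B]
  have hB : ∀ i, i ≠ i₀ → i ≠ i₁ → B i = A i := fun i h₀ h₁ => by simp [B, h₀, h₁]
  have hcases : ∀ i, i = i₀ ∨ i = i₁ ∨ (i ≠ i₀ ∧ i ≠ i₁) := by tauto
  refine ⟨B, ⟨fun i => ?_, fun i => ?_⟩, ?_, hB, ?_, ?_⟩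
  · rcases hcases i with rfl | rfl | ⟨h₀, h₁⟩
    · exact hB₀ ▸ (hA.1 i).union hR
    · exact hB₁ ▸ (hA.1 i).diff hR
    · exact hB i h₀ h₁ ▸ hA.1 i
  · rcases hcases i with rfl | rfl | ⟨h₀, h₁⟩
    · exact hB₀ ▸ (hA.2 i).union (dependsOnlyOn_preimage_eval hj₀ _)
    · exact hB₁ ▸ (hA.2 i).diff (dependsOnlyOn_preimage_eval hj₁ _)
    · exact hB i h₀ h₁ ▸ hA.2 i
  · refine iUnion_subset fun i x hx => mem_iUnion.2 ?_
    rcases hcases i with rfl | rfl | ⟨h₀, h₁⟩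
    · exact ⟨i, hB₀ ▸ Or.inl hx⟩
    · by_cases hxR : x ∈ R
      · exact ⟨i₀, hB₀ ▸ Or.inr hxR⟩
      · exact ⟨i, hB₁ ▸ ⟨hx, hxR⟩⟩
    · exact ⟨i, hB i h₀ h₁ ▸ hx⟩
  · calc (cubeMeasure m).real (B i₀) ≤ (cubeMeasure m).real (A i₀) + (cubeMeasure m).real R :=
          hB₀ ▸ measureReal_union_le _ _
      _ ≤ (cubeMeasure m).real (A i₀) + ((k + 1) / K - k / K) := by
          gcongr
          exact cubeMeasure_real_preimage_eval_Ico_le j (by gcongr; linarith)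
      _ = (cubeMeasure m).real (A i₀) + (K : ℝ)⁻¹ := by ring
  · have := measureReal_sdiff_add_inter (μ := cubeMeasure m) (s := A i₁) hR
    rw [hB₁]
    linarith [div_eq_mul_inv ((cubeMeasure m).real (A i₁)) K]

structure IsSlackCover (E : Fin n → Fin m → Prop) (p : Fin n → ℝ) (W : Finset (Fin n)) (α : ℝ)
    (B : Fin n → Set (Fin m → ℝ)) : Prop where
  conforms : Conforms E B
  measure_iUnion : cubeMeasure m (⋃ i, B i) = 1
  le : ∀ i, (cubeMeasure m).real (B i) ≤ p i
  add_le : ∀ i ∈ W, (cubeMeasure m).real (B i) + α ≤ p i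

theorem IsSlackCover.exists_insert {p : Fin n → ℝ} {W : Finset (Fin n)} {α : ℝ}
    {A : Fin n → Set (Fin m → ℝ)} (hA : IsSlackCover E p W α A) (hα : 0 < α) {i₀ i₁ : Fin n}
    (hi₀ : i₀ ∈ W) (hadj : (baseGraph E).Adj i₀ i₁) (hp : 0 < p i₁) :
    ∃ α' > 0, ∃ B, IsSlackCover E p (insert i₁ W) α' B := by
  obtain ⟨hne, j, hj₀, hj₁⟩ := hadj
  set K := ⌈2 / α⌉₊
  have hK : 0 < K := Nat.ceil_pos.2 (by positivity)
  have hKα : (K : ℝ)⁻¹ ≤ α / 2 := by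
    rw [inv_le_comm₀ (by positivity) (by positivity), inv_div]
    exact Nat.le_ceil _
  have hK1 : (K : ℝ)⁻¹ ≤ 1 := inv_le_one_of_one_le₀ (Nat.one_le_cast.2 hK)
  obtain ⟨B, hBc, hsub, hBA, hB₀, hB₁⟩ := hA.conforms.exists_transfer hne hj₀ hj₁ hK
  have hB₀' : (cubeMeasure m).real (B i₀) + α / 2 ≤ p i₀ := by linarith [hA.add_le i₀ hi₀]
  have hB₁' : (cubeMeasure m).real (B i₁) + p i₁ * (K : ℝ)⁻¹ ≤ p i₁ := by
    nlinarith [hA.le i₁]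
  have hslack₁ : 0 < p i₁ * (K : ℝ)⁻¹ := by positivity
  have hα' : 0 < min (α / 2) (p i₁ * (K : ℝ)⁻¹) := lt_min (half_pos hα) hslack₁
  refine ⟨_, hα', B, hBc, le_antisymm prob_le_one (hA.measure_iUnion ▸ measure_mono hsub),
    fun i => ?_, fun i hi => ?_⟩
  · by_cases h₀ : i = i₀
    · subst h₀; linarith
    by_cases h₁ : i = i₁
    · subst h₁; linarith
    · exact hBA i h₀ h₁ ▸ hA.le i
  · by_cases h₀ : i = i₀
    · subst h₀; linarith [min_le_left (α / 2) (p i₁ * (K : ℝ)⁻¹)]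
    by_cases h₁ : i = i₁
    · subst h₁; linarith [min_le_right (α / 2) (p i * (K : ℝ)⁻¹)]
    · rw [hBA i h₀ h₁]
      linarith [hA.add_le i ((Finset.mem_insert.1 hi).resolve_left h₁),
        min_le_left (α / 2) (p i₁ * (K : ℝ)⁻¹)]

theorem OnBoundary.not_isSlackCover_univ {p : Fin n → ℝ} (hbd : OnBoundary E p)
    (hE : ∀ i, ∃ j, E i j) (hp : ∀ i, p i ≤ 1) {α : ℝ} (hα : 0 < α)
    {B : Fin n → Set (Fin m → ℝ)} (hB : IsSlackCover E p Finset.univ α B) : False := by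
  obtain ⟨ε, hε, hεα⟩ : ∃ ε ∈ Ioo (0 : ℝ) 1, 2 * ε ≤ α :=
    ⟨min α 1 / 2, ⟨by positivity, by linarith [min_le_right α 1]⟩, by linarith [min_le_left α 1]⟩
  have hC : ∀ i, ∃ C, B i ⊆ C ∧ MeasurableSet C ∧ DependsOnlyOn C {j | E i j} ∧
      (cubeMeasure m).real C = (1 - ε) * p i := fun i => by
    obtain ⟨j, hj⟩ := hE i
    have hBi := hB.add_le i (Finset.mem_univ i)
    have hpi : 0 ≤ p i := by linarith [measureReal_nonneg (μ := cubeMeasure m) (s := B i)]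
    exact exists_superset_measureReal_eq (hB.conforms.1 i) (hB.conforms.2 i) hj
      (by linarith [mul_nonneg hε.1.le (sub_nonneg.2 (hp i))])
      (by linarith [mul_nonneg hε.1.le hpi, hp i])
  choose C hBC hCm hCd hCμ using hC
  refine ((hbd ε hε).1 C ⟨hCm, hCd⟩ fun i => ?_).ne <|
    le_antisymm prob_le_one (hB.measure_iUnion.symm.le.trans (measure_mono (iUnion_mono hBC)))
  rw [← hCμ i, ofReal_measureReal]

end Bigraph

theorem stmt4 {n m : ℕ} (E : Fin n → Fin m → Prop)
    (hconn : (baseGraph E).Connected) (p : Fin n → ℝ)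
    (hp : ∀ i, 0 < p i ∧ p i ≤ 1) (hbd : OnBoundary E p)
    (A : Fin n → Set (Fin m → ℝ)) (hA : Conforms E A)
    (hle : ∀ i, cubeMeasure m (A i) ≤ ENNReal.ofReal (p i))
    (hfull : cubeMeasure m (⋃ i, A i) = 1) :
    ∀ i, cubeMeasure m (A i) = ENNReal.ofReal (p i) := by
  intro i
  -- a lone vertex need not own any coordinate, so the slab argument does not apply to it
  rcases subsingleton_or_nontrivial (Fin n) with hn | hn
  · have hAi : 1 ≤ cubeMeasure m (A i) :=
      hfull.symm.le.trans (measure_mono (iUnion_subset fun k => by rw [Subsingleton.elim k i]))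
    exact le_antisymm (hle i) ((ENNReal.ofReal_le_one.2 (hp i).2).trans hAi)
  have hE : ∀ v, ∃ j, E v j := fun v =>
    let ⟨_, _, j, hj, _⟩ := hconn.preconnected.exists_adj_of_nontrivial v
    ⟨j, hj⟩
  refine le_antisymm (hle i) (not_lt.1 fun hlt => ?_)
  have hAi : (cubeMeasure m).real (A i) < p i := ENNReal.toReal_lt_of_lt_ofReal hlt
  have hA₀ : IsSlackCover E p {i} (p i - (cubeMeasure m).real (A i)) A :=
    ⟨hA, hfull, fun v => ENNReal.toReal_le_of_le_ofReal (hp v).1.le (hle v), by simp⟩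
  obtain ⟨α, hα, B, hB⟩ := hconn.preconnected.finset_induction_adj
    (P := fun W => ∃ α > 0, ∃ B, IsSlackCover E p W α B) (Finset.singleton_nonempty i)
    ⟨_, sub_pos.2 hAi, A, hA₀⟩
    fun _ ⟨_, hα, _, hB⟩ _ hu v _ huv => hB.exists_insert hα hu huv (hp v).1
  exact hbd.not_isSlackCover_univ hE (fun v => (hp v).2) hα hB
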